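/- Let (V,d) be a finite metric space with |V| = n ≥ 2, and for each point i take N(i) = V∖{i}. Let i ≠ j and let 0 < t < 1 satisfy 1 − t ≥ (t/d(i,j)²)·max(1/d_i, 1/d_j). Then W(D_{t,i}, D_{t,j}) ≥ (1−t)·d(i,j) − (t/(2·d(i,j)))·(1/d_i + 1/d_j). -/

import Mathlib

open Finset

/-- `A` is a coupling of the probability distributions `μ` and `ν`. -/
def IsCoupling {V : Type*} [Fintype V] (μ ν : V → ℝ) (A : V → V → ℝ) : Prop :=
  (∀ u v, 0 ≤ A u v) ∧ (∀ u, ∑ v, A u v = μ u) ∧ (∀ v, ∑ u, A u v = ν v)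

/-- The Wasserstein (transportation) cost between two probability distributions on a
finite metric space: the infimum (= minimum) over all couplings of the transport cost. -/
noncomputable def Wcost {V : Type*} [Fintype V] [MetricSpace V] (μ ν : V → ℝ) : ℝ :=
  sInf {c : ℝ | ∃ A : V → V → ℝ, IsCoupling μ ν A ∧ c = ∑ u, ∑ v, A u v * dist u v}

/-- `dd N i = Σ_{k ∈ N} d(i,k)^{-2}`. -/
noncomputable def dd {V : Type*} [MetricSpace V] (N : Finset V) (i : V) : ℝ :=
  ∑ k ∈ N, ((dist i k)⁻¹) ^ 2

/-- `cc N i = Σ_{k ∈ N} d(i,k)^{-1}`. -/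
noncomputable def cc {V : Type*} [MetricSpace V] (N : Finset V) (i : V) : ℝ :=
  ∑ k ∈ N, (dist i k)⁻¹

/-- The probability distribution `D_{t,i}` concentrated at `i` with mass `t` spread on the
neighbor set `N`. -/
noncomputable def Dprob {V : Type*} [MetricSpace V] [DecidableEq V]
    (N : Finset V) (t : ℝ) (i : V) : V → ℝ := fun v =>
  if v = i then 1 - t else if v ∈ N then t * ((dist i v)⁻¹) ^ 2 / dd N i else 0

/-!
The lower bound comes from Kantorovich duality: for every 1-Lipschitz `f`, the cost of any
coupling of `μ` and `ν` is at least `∑ μ f - ∑ ν f`. The dual witness is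
`f v = d(i,j) · d(j,v) / (d(i,v) + d(j,v))`, which equals `d(i,j)` at `i` and `0` at `j`.
Writing `x k = d(i,k)⁻²`, `y k = d(j,k)⁻²`, `g k = d(j,k) / (d(i,k) + d(j,k))` over the points
`k ≠ i, j`, the excess of `∑ μ f - ∑ ν f` over the claimed bound is, up to a positive factor,
`d(i,j) · ((∑ y)(∑ x g) - (∑ x)(∑ y g)) + d(i,j)⁻¹ · ∑ (x - y)(g - 1/2)`.
Both terms are nonnegative because `y / x` increases and `g` decreases with `d(i,k) / d(j,k)`:
the first is a weighted Chebyshev sum inequality, the second holds termwise.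
-/

section Transport

variable {V : Type*} [Fintype V] {μ ν : V → ℝ}

lemma isCoupling_mul (hμ : ∀ u, 0 ≤ μ u) (hν : ∀ v, 0 ≤ ν v) (hμ1 : ∑ u, μ u = 1)
    (hν1 : ∑ v, ν v = 1) : IsCoupling μ ν fun u v => μ u * ν v :=
  ⟨fun u v => mul_nonneg (hμ u) (hν v), fun u => by rw [← mul_sum, hν1, mul_one],
    fun v => by rw [← sum_mul, hμ1, one_mul]⟩

variable [MetricSpace V]

lemma IsCoupling.sum_mul_sub_sum_mul_le_cost {A : V → V → ℝ} (hA : IsCoupling μ ν A)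
    {f : V → ℝ} (hf : LipschitzWith 1 f) :
    ∑ u, μ u * f u - ∑ v, ν v * f v ≤ ∑ u, ∑ v, A u v * dist u v := by
  obtain ⟨hA0, hrow, hcol⟩ := hA
  have hμf : ∑ u, μ u * f u = ∑ u, ∑ v, A u v * f u := by simp only [← hrow, sum_mul]
  have hνf : ∑ v, ν v * f v = ∑ u, ∑ v, A u v * f v := by
    rw [sum_comm]; simp only [← hcol, sum_mul]
  rw [hμf, hνf, ← sum_sub_distrib]
  refine sum_le_sum fun u _ => ?_
  rw [← sum_sub_distrib]
  refine sum_le_sum fun v _ => ?_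
  rw [← mul_sub]
  exact mul_le_mul_of_nonneg_left
    (sub_le_iff_le_add'.2 (by simpa using hf.le_add_mul u v)) (hA0 u v)

lemma sum_mul_sub_sum_mul_le_wcost (hμ : ∀ u, 0 ≤ μ u) (hν : ∀ v, 0 ≤ ν v)
    (hμ1 : ∑ u, μ u = 1) (hν1 : ∑ v, ν v = 1) {f : V → ℝ} (hf : LipschitzWith 1 f) :
    ∑ u, μ u * f u - ∑ v, ν v * f v ≤ Wcost μ ν :=
  le_csInf ⟨_, _, isCoupling_mul hμ hν hμ1 hν1, rfl⟩ fun _ ⟨_, hA, hc⟩ =>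
    hc ▸ hA.sum_mul_sub_sum_mul_le_cost hf

end Transport

section Dprob

variable {V : Type*} [MetricSpace V] {N : Finset V} {i : V}

lemma dd_nonneg : 0 ≤ dd N i := sum_nonneg fun _ _ => sq_nonneg _

lemma dd_pos {j : V} (hj : j ∈ N) (hij : i ≠ j) : 0 < dd N i :=
  sum_pos' (fun _ _ => sq_nonneg _) ⟨j, hj, by have := dist_pos.2 hij; positivity⟩

variable [DecidableEq V] {t : ℝ}

lemma Dprob_nonneg (ht0 : 0 ≤ t) (ht1 : t ≤ 1) (v : V) : 0 ≤ Dprob N t i v := by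
  unfold Dprob
  split_ifs
  · linarith
  · exact div_nonneg (mul_nonneg ht0 (sq_nonneg _)) dd_nonneg
  · rfl

variable [Fintype V]

lemma sum_Dprob_mul (hi : i ∉ N) (g : V → ℝ) :
    ∑ v, Dprob N t i v * g v = (1 - t) * g i + t / dd N i * ∑ k ∈ N, (dist i k)⁻¹ ^ 2 * g k := by
  have hsplit : ∀ v, Dprob N t i v * g v = (if v = i then (1 - t) * g i else 0) +
      if v ∈ N then t / dd N i * ((dist i v)⁻¹ ^ 2 * g v) else 0 := by
    intro v
    unfold Dprob
    by_cases hv : v = i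
    · subst hv; simp [hi]
    · by_cases hvN : v ∈ N
      · simp only [hv, hvN, if_true, if_false, zero_add]; ring
      · simp [hv, hvN]
  simp only [hsplit, sum_add_distrib, sum_ite_eq', mem_univ, if_true, sum_ite_mem, univ_inter,
    mul_sum]

lemma sum_Dprob (hi : i ∉ N) (hd : dd N i ≠ 0) : ∑ v, Dprob N t i v = 1 := by
  have h := sum_Dprob_mul (t := t) hi fun _ => 1
  simp only [mul_one] at h
  rw [h, show ∑ k ∈ N, (dist i k)⁻¹ ^ 2 = dd N i from rfl, div_mul_cancel₀ _ hd]
  ring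

end Dprob

lemma ratio_cross_nonneg {a b a' b' : ℝ} (ha : 0 < a) (hb : 0 < b) (ha' : 0 < a')
    (hb' : 0 < b') :
    0 ≤ (b⁻¹ ^ 2 * a'⁻¹ ^ 2 - a⁻¹ ^ 2 * b'⁻¹ ^ 2) * (b' / (a' + b') - b / (a + b)) := by
  have hx : b⁻¹ ^ 2 * a'⁻¹ ^ 2 - a⁻¹ ^ 2 * b'⁻¹ ^ 2 =
      (a * b' - a' * b) * (a * b' + a' * b) / (a ^ 2 * b ^ 2 * a' ^ 2 * b' ^ 2) := by
    field_simp
    ring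
  have hg : b' / (a' + b') - b / (a + b) = (a * b' - a' * b) / ((a' + b') * (a + b)) := by
    field_simp
    ring
  rw [hx, hg, div_mul_div_comm, mul_right_comm, ← sq]
  positivity

lemma ratio_half_nonneg {a b : ℝ} (ha : 0 < a) (hb : 0 < b) :
    0 ≤ (a⁻¹ ^ 2 - b⁻¹ ^ 2) * (b / (a + b) - 1 / 2) := by
  have hx : a⁻¹ ^ 2 - b⁻¹ ^ 2 = (b - a) * (b + a) / (a ^ 2 * b ^ 2) := by
    field_simp
    ring
  have hg : b / (a + b) - 1 / 2 = (b - a) / (2 * (a + b)) := by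
    field_simp
    ring
  rw [hx, hg, div_mul_div_comm, mul_right_comm, ← sq]
  positivity

lemma sum_mul_sum_sub_sum_mul_sum_nonneg {ι : Type*} (s : Finset ι) (x y g : ι → ℝ)
    (h : ∀ u ∈ s, ∀ v ∈ s, 0 ≤ (y u * x v - x u * y v) * (g v - g u)) :
    0 ≤ (∑ u ∈ s, y u) * (∑ v ∈ s, x v * g v) - (∑ u ∈ s, x u) * ∑ v ∈ s, y v * g v := by
  have hswap : ∑ u ∈ s, ∑ v ∈ s, (y u * x v - x u * y v) * g u =
      -∑ u ∈ s, ∑ v ∈ s, (y u * x v - x u * y v) * g v := by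
    rw [sum_comm, ← sum_neg_distrib]
    refine sum_congr rfl fun u _ => ?_
    rw [← sum_neg_distrib]
    exact sum_congr rfl fun v _ => by ring
  have hexpand : ∑ u ∈ s, ∑ v ∈ s, (y u * x v - x u * y v) * g v =
      (∑ u ∈ s, y u) * (∑ v ∈ s, x v * g v) - (∑ u ∈ s, x u) * ∑ v ∈ s, y v * g v := by
    simp only [sum_mul_sum, ← sum_sub_distrib, sub_mul, mul_assoc]
  have hsum := sum_nonneg fun u hu => sum_nonneg fun v hv => h u hu v hv
  simp only [mul_sub, sum_sub_distrib, hswap] at hsum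
  linarith

lemma gap_bound_of_nonneg {D SA SB SAR SBR : ℝ} (hD : 0 < D) (hSA : 0 ≤ SA) (hSB : 0 ≤ SB)
    (hcheb : 0 ≤ SB * SAR - SA * SBR) (hhalf : 0 ≤ SAR - SBR - (SA - SB) / 2) :
    -(1 / (2 * D)) * (1 / (D⁻¹ ^ 2 + SA) + 1 / (D⁻¹ ^ 2 + SB)) ≤
      D * SAR / (D⁻¹ ^ 2 + SA) - (D⁻¹ + D * SBR) / (D⁻¹ ^ 2 + SB) := by
  have hexcess : D * SAR / (D⁻¹ ^ 2 + SA) - (D⁻¹ + D * SBR) / (D⁻¹ ^ 2 + SB) -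
      -(1 / (2 * D)) * (1 / (D⁻¹ ^ 2 + SA) + 1 / (D⁻¹ ^ 2 + SB)) =
      (D * (SB * SAR - SA * SBR) + (SAR - SBR - (SA - SB) / 2) / D) /
        ((D⁻¹ ^ 2 + SA) * (D⁻¹ ^ 2 + SB)) := by
    field_simp
    ring
  rw [← sub_nonneg, hexcess]
  exact div_nonneg (add_nonneg (mul_nonneg hD.le hcheb) (div_nonneg hhalf hD.le)) (by positivity)

section RatioPotential

variable {V : Type*} [MetricSpace V] {i j : V}

variable (i j) in
noncomputable def ratioPotential (v : V) : ℝ := dist i j * (dist j v / (dist i v + dist j v))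

lemma ratioPotential_left (hij : i ≠ j) : ratioPotential i j i = dist i j := by
  simp [ratioPotential, dist_comm j i, dist_ne_zero.2 hij]

lemma ratioPotential_right : ratioPotential i j j = 0 := by
  simp [ratioPotential]

lemma lipschitzWith_ratioPotential (hij : i ≠ j) : LipschitzWith 1 (ratioPotential i j) := by
  refine LipschitzWith.of_le_add fun u v => sub_le_iff_le_add'.1 ?_
  have hD := dist_pos.2 hij
  have hsum : ∀ w, dist i j ≤ dist i w + dist j w := fun w => dist_triangle_right i j w
  have hsu := hD.trans_le (hsum u)
  have hsv := hD.trans_le (hsum v)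
  have hcross : dist j u * dist i v - dist j v * dist i u ≤ (dist i u + dist j u) * dist u v := by
    have hiv := mul_le_mul_of_nonneg_left (dist_triangle i u v) (dist_nonneg (x := j) (y := u))
    have hju :=
      mul_le_mul_of_nonneg_right (dist_triangle_right j u v) (dist_nonneg (x := i) (y := u))
    linarith
  calc ratioPotential i j u - ratioPotential i j v
      = dist i j * (dist j u * dist i v - dist j v * dist i u) /
          ((dist i u + dist j u) * (dist i v + dist j v)) := by
        unfold ratioPotential; field_simp; ring
    _ ≤ dist i j * ((dist i u + dist j u) * dist u v) /
          ((dist i u + dist j u) * (dist i v + dist j v)) := by gcongr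
    _ = dist i j / (dist i v + dist j v) * dist u v := by field_simp
    _ ≤ dist u v := mul_le_of_le_one_left dist_nonneg ((div_le_one hsv).2 (hsum v))

lemma ratioPotential_weighted_gap [Fintype V] [DecidableEq V] (hij : i ≠ j) :
    -(1 / (2 * dist i j)) * (1 / dd (univ.erase i) i + 1 / dd (univ.erase j) j) ≤
      (∑ k ∈ univ.erase i, (dist i k)⁻¹ ^ 2 * ratioPotential i j k) / dd (univ.erase i) i -
        (∑ k ∈ univ.erase j, (dist j k)⁻¹ ^ 2 * ratioPotential i j k) / dd (univ.erase j) j := by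
  have hD : 0 < dist i j := dist_pos.2 hij
  have hjS : j ∈ univ.erase i := mem_erase.2 ⟨hij.symm, mem_univ j⟩
  have hiS : i ∈ univ.erase j := mem_erase.2 ⟨hij, mem_univ i⟩
  set S := (univ.erase i).erase j
  have hS : ∀ k ∈ S, 0 < dist i k ∧ 0 < dist j k := fun k hk =>
    ⟨dist_pos.2 (ne_of_mem_erase (mem_of_mem_erase hk)).symm,
      dist_pos.2 (ne_of_mem_erase hk).symm⟩
  have hSj : (univ.erase j).erase i = S := erase_right_comm
  set g : V → ℝ := fun k => dist j k / (dist i k + dist j k)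
  have hdi : dd (univ.erase i) i = (dist i j)⁻¹ ^ 2 + ∑ k ∈ S, (dist i k)⁻¹ ^ 2 :=
    (add_sum_erase _ _ hjS).symm
  have hdj : dd (univ.erase j) j = (dist i j)⁻¹ ^ 2 + ∑ k ∈ S, (dist j k)⁻¹ ^ 2 := by
    rw [dd, ← add_sum_erase _ _ hiS, hSj, dist_comm j i]
  have hfi : ∑ k ∈ univ.erase i, (dist i k)⁻¹ ^ 2 * ratioPotential i j k =
      dist i j * ∑ k ∈ S, (dist i k)⁻¹ ^ 2 * g k := by
    rw [← add_sum_erase _ _ hjS, ratioPotential_right, mul_zero, zero_add, mul_sum]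
    exact sum_congr rfl fun k _ => by unfold ratioPotential; ring
  have hfj : ∑ k ∈ univ.erase j, (dist j k)⁻¹ ^ 2 * ratioPotential i j k =
      (dist i j)⁻¹ + dist i j * ∑ k ∈ S, (dist j k)⁻¹ ^ 2 * g k := by
    rw [← add_sum_erase _ _ hiS, ratioPotential_left hij, hSj, mul_sum, dist_comm j i]
    congr 1
    · field_simp
    · exact sum_congr rfl fun k _ => by unfold ratioPotential; ring
  have hcheb := sum_mul_sum_sub_sum_mul_sum_nonneg S (fun k => (dist i k)⁻¹ ^ 2)
    (fun k => (dist j k)⁻¹ ^ 2) g fun u hu v hv =>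
      ratio_cross_nonneg (hS u hu).1 (hS u hu).2 (hS v hv).1 (hS v hv).2
  have hhalf : 0 ≤ ∑ k ∈ S, ((dist i k)⁻¹ ^ 2 - (dist j k)⁻¹ ^ 2) * (g k - 1 / 2) :=
    sum_nonneg fun k hk => ratio_half_nonneg (hS k hk).1 (hS k hk).2
  simp only [sub_mul, mul_sub, sum_sub_distrib, ← sum_mul] at hhalf
  rw [hdi, hdj, hfi, hfj]
  exact gap_bound_of_nonneg hD (sum_nonneg fun _ _ => sq_nonneg _)
    (sum_nonneg fun _ _ => sq_nonneg _) hcheb (by linarith)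

end RatioPotential

theorem complete_graph_local_cost_lower_bound_general {V : Type*} [Fintype V] [MetricSpace V]
    [DecidableEq V] (i j : V) (hij : i ≠ j)
    (t : ℝ) (ht0 : 0 < t) (ht1 : t < 1) :
    Wcost (Dprob (Finset.univ.erase i) t i) (Dprob (Finset.univ.erase j) t j) ≥
      (1 - t) * dist i j -
        t / (2 * dist i j) *
          (1 / dd (Finset.univ.erase i) i + 1 / dd (Finset.univ.erase j) j) := by
  have hi : i ∉ univ.erase i := notMem_erase i univ
  have hj : j ∉ univ.erase j := notMem_erase j univ
  have hdi := dd_pos (mem_erase.2 ⟨hij.symm, mem_univ j⟩) hij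
  have hdj := dd_pos (mem_erase.2 ⟨hij, mem_univ i⟩) hij.symm
  have hdual := sum_mul_sub_sum_mul_le_wcost (Dprob_nonneg ht0.le ht1.le)
    (Dprob_nonneg ht0.le ht1.le) (sum_Dprob hi hdi.ne') (sum_Dprob hj hdj.ne')
    (lipschitzWith_ratioPotential hij)
  rw [sum_Dprob_mul hi, sum_Dprob_mul hj, ratioPotential_left hij, ratioPotential_right] at hdual
  have hgap := mul_le_mul_of_nonneg_left (ratioPotential_weighted_gap hij) ht0.le
  linear_combination hdual + hgap

theorem complete_graph_local_cost_lower_bound {V : Type*} [Fintype V] [MetricSpace V]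
    [DecidableEq V] (hn : 2 ≤ Fintype.card V)
    (i j : V) (hij : i ≠ j)
    (t : ℝ) (ht0 : 0 < t) (ht1 : t < 1)
    (ht2 : 1 - t ≥ t / (dist i j) ^ 2 *
      max (1 / dd (Finset.univ.erase i) i) (1 / dd (Finset.univ.erase j) j)) :
    Wcost (Dprob (Finset.univ.erase i) t i) (Dprob (Finset.univ.erase j) t j) ≥
      (1 - t) * dist i j -
        t / (2 * dist i j) *
          (1 / dd (Finset.univ.erase i) i + 1 / dd (Finset.univ.erase j) j) :=
  complete_graph_local_cost_lower_bound_general i j hij t ht0 ht1
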